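/- Let G be a group generated by a finite set S, with word length |·| with respect to S, and stable norm [[·]] = lim_{n→∞} |g^n| / n. Suppose g ∈ G has infinite order and there exist real constants λ ≥ 1 and ε ≥ 0, an integer k > 0, and a positive integer m such that g^m is conjugate to an element ω ∈ G with |ω| ≥ k and n · |ω| ≤ λ · |ω^n| + ε for all positive integers n. Then [[g]] ≥ k / (λ m). -/

import Mathlib

open Filter Topology

/-- The word length of `g` with respect to a generating set `S`: the infimum of the lengths
of words on `S ∪ S⁻¹` representing `g`. -/
noncomputable def wordLength {G : Type*} [Group G] (S : Set G) (g : G) : ℕ :=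
  sInf {n : ℕ | ∃ l : List G, l.length = n ∧ (∀ x ∈ l, x ∈ S ∨ x⁻¹ ∈ S) ∧ l.prod = g}

/-!
Conjugating `g ^ (m * j) = a * ω ^ j * a⁻¹` back costs at most `|a| + |a⁻¹|` letters, so the
quasigeodesic inequality gives `j * k ≤ λ * (|g ^ (m * j)| + |a| + |a⁻¹|) + ε`. Dividing by `j`
and letting `j → ∞` along the subsequence `m * j` yields `k ≤ λ * m * [[g]]`.
-/

section WordLength

variable {G : Type*} [Group G] {S : Set G}

lemma exists_list_prod_eq (hS : Subgroup.closure S = ⊤) (g : G) :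
    ∃ l : List G, (∀ x ∈ l, x ∈ S ∨ x⁻¹ ∈ S) ∧ l.prod = g := by
  have hg : g ∈ (Subgroup.closure S).toSubmonoid := by simp [hS]
  rw [Subgroup.closure_toSubmonoid] at hg
  simpa only [Set.mem_union, Set.mem_inv] using Submonoid.exists_list_of_mem_closure hg

lemma wordLength_le_length {g : G} {l : List G} (hl : ∀ x ∈ l, x ∈ S ∨ x⁻¹ ∈ S)
    (hg : l.prod = g) : wordLength S g ≤ l.length :=
  Nat.sInf_le ⟨l, rfl, hl, hg⟩

lemma exists_list_length_eq_wordLength (hS : Subgroup.closure S = ⊤) (g : G) :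
    ∃ l : List G, l.length = wordLength S g ∧ (∀ x ∈ l, x ∈ S ∨ x⁻¹ ∈ S) ∧ l.prod = g := by
  obtain ⟨l, hl, hg⟩ := exists_list_prod_eq hS g
  exact Nat.sInf_mem (s := {n | ∃ l : List G, l.length = n ∧ (∀ x ∈ l, x ∈ S ∨ x⁻¹ ∈ S) ∧
    l.prod = g}) ⟨l.length, l, rfl, hl, hg⟩

lemma wordLength_mul_le (hS : Subgroup.closure S = ⊤) (x y : G) :
    wordLength S (x * y) ≤ wordLength S x + wordLength S y := by
  obtain ⟨lx, hlx, hx, rfl⟩ := exists_list_length_eq_wordLength hS x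
  obtain ⟨ly, hly, hy, rfl⟩ := exists_list_length_eq_wordLength hS y
  rw [← hlx, ← hly, ← List.length_append]
  refine wordLength_le_length (fun z hz => ?_) List.prod_append
  rcases List.mem_append.1 hz with h | h
  exacts [hx z h, hy z h]

lemma wordLength_mul_mul_le (hS : Subgroup.closure S = ⊤) (x y z : G) :
    wordLength S (x * y * z) ≤ wordLength S x + wordLength S y + wordLength S z :=
  (wordLength_mul_le hS _ _).trans (Nat.add_le_add_right (wordLength_mul_le hS _ _) _)

end WordLength

lemma le_mul_of_tendsto_div_of_forall_le {f : ℕ → ℝ} {l k lam C : ℝ} {m : ℕ} (hm : 0 < m)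
    (hf : Tendsto (fun n : ℕ => f n / n) atTop (𝓝 l))
    (hbound : ∀ j : ℕ, 1 ≤ j → j * k ≤ lam * f (m * j) + C) :
    k ≤ lam * m * l := by
  have hsub : Tendsto (fun j : ℕ => f (m * j) / (m * j : ℕ)) atTop (𝓝 l) :=
    hf.comp (tendsto_atTop_mono (fun j => Nat.le_mul_of_pos_left j hm) tendsto_id)
  have hlim : Tendsto (fun j : ℕ => lam * m * (f (m * j) / (m * j : ℕ)) + C * (1 / j)) atTop
      (𝓝 (lam * m * l + C * 0)) :=
    (hsub.const_mul _).add (tendsto_one_div_atTop_nhds_zero_nat.const_mul C)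
  rw [mul_zero, add_zero] at hlim
  refine ge_of_tendsto hlim (eventually_atTop.2 ⟨1, fun j hj => ?_⟩)
  have hj0 : (0 : ℝ) < j := by exact_mod_cast hj
  have hm0 : (0 : ℝ) < m := by exact_mod_cast hm
  have hrw : lam * m * (f (m * j) / (m * j : ℕ)) + C * (1 / j) = (lam * f (m * j) + C) / j := by
    push_cast
    field_simp
  rw [hrw, le_div_iff₀ hj0, mul_comm]
  exact hbound j hj

theorem stableNorm_ge_of_pow_conj_quasigeodesic_general {G : Type*} [Group G] (S : Set G)
    (hgen : Subgroup.closure S = ⊤) (g ω : G)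
    (lam ε : ℝ) (hlam : 1 ≤ lam) (k : ℤ)
    (m : ℕ) (hm : 0 < m)
    (hconj : ∃ a : G, g ^ m = a * ω * a⁻¹)
    (hlen : (k : ℝ) ≤ (wordLength S ω : ℝ))
    (hquasi : ∀ n : ℕ, 1 ≤ n →
      (n : ℝ) * (wordLength S ω : ℝ) ≤ lam * (wordLength S (ω ^ n) : ℝ) + ε)
    (l : ℝ)
    (hl : Tendsto (fun n : ℕ => (wordLength S (g ^ n) : ℝ) / n) atTop (𝓝 l)) :
    l ≥ (k : ℝ) / (lam * m) := by
  obtain ⟨a, ha⟩ := hconj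
  have hpow (j : ℕ) : ω ^ j = a⁻¹ * g ^ (m * j) * a := by
    rw [pow_mul, ha, conj_pow]
    group
  have hconj_len (j : ℕ) : (wordLength S (ω ^ j) : ℝ) ≤
      wordLength S a⁻¹ + wordLength S (g ^ (m * j)) + wordLength S a := by
    rw [hpow]
    exact_mod_cast wordLength_mul_mul_le hgen _ _ _
  have hkey : (k : ℝ) ≤ lam * m * l := by
    refine le_mul_of_tendsto_div_of_forall_le (C := ε + lam * (wordLength S a⁻¹ + wordLength S a))
      hm hl fun j hj => ?_
    calc (j : ℝ) * k ≤ j * wordLength S ω := by gcongr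
      _ ≤ lam * wordLength S (ω ^ j) + ε := hquasi j hj
      _ ≤ _ := by nlinarith [hconj_len j]
  rw [ge_iff_le, div_le_iff₀ (by positivity)]
  linarith

/-- If `g ∈ G` has infinite order and some positive power `g^m` is conjugate to an element
`ω` with `|ω| ≥ k > 0` satisfying the quasigeodesic inequality
`n ⬝ |ω| ≤ λ ⬝ |ω^n| + ε` for all positive integers `n` (with `λ ≥ 1`, `ε ≥ 0`),
then the stable norm `[[g]] = lim |g^n|/n` satisfies `[[g]] ≥ k / (λ m)`. -/
theorem stableNorm_ge_of_pow_conj_quasigeodesic {G : Type*} [Group G] (S : Set G)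
    (hS : S.Finite) (hgen : Subgroup.closure S = ⊤) (g ω : G)
    (hord : ∀ n : ℕ, 0 < n → g ^ n ≠ 1)
    (lam ε : ℝ) (hlam : 1 ≤ lam) (hε : 0 ≤ ε) (k : ℤ) (hk : 0 < k)
    (m : ℕ) (hm : 0 < m)
    (hconj : ∃ a : G, g ^ m = a * ω * a⁻¹)
    (hlen : (k : ℝ) ≤ (wordLength S ω : ℝ))
    (hquasi : ∀ n : ℕ, 1 ≤ n →
      (n : ℝ) * (wordLength S ω : ℝ) ≤ lam * (wordLength S (ω ^ n) : ℝ) + ε)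
    (l : ℝ)
    (hl : Tendsto (fun n : ℕ => (wordLength S (g ^ n) : ℝ) / n) atTop (𝓝 l)) :
    l ≥ (k : ℝ) / (lam * m) :=
  stableNorm_ge_of_pow_conj_quasigeodesic_general S hgen g ω lam ε hlam k m hm hconj hlen hquasi l
    hl
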